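/- arXiv:2403.09643 — 2 statements merged into one kernel-verified Lean document; each statement's English description precedes it below -/
import Mathlib

section
/- Let $f : \mathbb{R} \to \mathbb{R}$ be smooth and let $n, a \in \mathbb{N}$. Then for all $x \in \mathbb{R}$, $\frac{d^a}{dx^a}\big[\phi_n(x) f(x)\big] = \sum_{m=0}^{n} \sum_{u=0}^{m} \binom{n}{m}\, S_2(m,u)\, \phi_{n-m}(x)\, (a)_u\, f^{(a-u)}(x)$, where summands with $u > a$ vanish because $(a)_u = 0$ (so the derivative order $a-u$ may be read as truncated natural subtraction). -/
/-- The falling factorial `(a)_m = a (a-1) ⋯ (a-m+1)`. -/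
noncomputable def fallingFactorial (a : ℝ) (m : ℕ) : ℝ :=
  ∏ i ∈ Finset.range m, (a - i)

/-- The Stirling numbers of the second kind
`S₂(n,m) = (1/m!) ∑_{j=0}^{m} (-1)^{m-j} C(m,j) jⁿ`. -/
noncomputable def stirlingSecond (n m : ℕ) : ℝ :=
  (1 / (m.factorial : ℝ)) *
    ∑ j ∈ Finset.range (m + 1), (-1 : ℝ) ^ (m - j) * (m.choose j : ℝ) * (j : ℝ) ^ n

/-- The exponential (Bell) polynomials `φₙ(x) = ∑_{m=0}^{n} S₂(n,m) xᵐ`. -/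
noncomputable def bellPoly (n : ℕ) (x : ℝ) : ℝ :=
  ∑ m ∈ Finset.range (n + 1), stirlingSecond n m * x ^ m

noncomputable def altSum (u m : ℕ) : ℝ :=
  ∑ j ∈ Finset.range (u + 1), (-1 : ℝ) ^ j * (u.choose j : ℝ) * (j : ℝ) ^ m

lemma altSum_succ (u m : ℕ) :
    altSum (u + 1) m = altSum u m - ∑ t ∈ Finset.range (m + 1),
      (m.choose t : ℝ) * altSum u t := by
  have key : ∀ i : ℕ, (-1 : ℝ) ^ (i+1) * ((u+1).choose (i+1) : ℝ) * ((i+1 : ℕ) : ℝ) ^ m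
      = -((-1:ℝ)^i * (u.choose i : ℝ) * ((i+1:ℕ):ℝ)^m)
        + ((-1:ℝ)^(i+1) * (u.choose (i+1) : ℝ) * ((i+1:ℕ):ℝ)^m) := by
    intro i
    rw [Nat.choose_succ_succ]
    push_cast
    ring
  rw [altSum, Finset.sum_range_succ']
  simp only [key]
  rw [Finset.sum_add_distrib]
  have h1 : ∑ i ∈ Finset.range (u+1), ((-1:ℝ)^(i+1) * (u.choose (i+1) : ℝ) * ((i+1:ℕ):ℝ)^m)
      = altSum u m - (-1:ℝ)^0 * (u.choose 0 : ℝ) * ((0:ℕ):ℝ)^m := by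
    rw [altSum, Finset.sum_range_succ' (fun j => (-1:ℝ)^j * (u.choose j : ℝ) * ((j:ℕ):ℝ)^m) u]
    rw [Finset.sum_range_succ]
    simp
  have h2 : ∑ i ∈ Finset.range (u+1), -((-1:ℝ)^i * (u.choose i : ℝ) * ((i+1:ℕ):ℝ)^m)
      = - ∑ t ∈ Finset.range (m+1), (m.choose t : ℝ) * altSum u t := by
    rw [Finset.sum_neg_distrib, neg_inj]
    have expand : ∀ i : ℕ, ((i+1:ℕ):ℝ)^m = ∑ t ∈ Finset.range (m+1), (i:ℝ)^t * (m.choose t : ℝ) := by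
      intro i
      push_cast
      rw [add_pow]
      exact Finset.sum_congr rfl fun t _ => by ring
    calc ∑ i ∈ Finset.range (u+1), (-1:ℝ)^i * (u.choose i : ℝ) * ((i+1:ℕ):ℝ)^m
        = ∑ i ∈ Finset.range (u+1), ∑ t ∈ Finset.range (m+1),
            (m.choose t : ℝ) * ((-1:ℝ)^i * (u.choose i : ℝ) * (i:ℝ)^t) := by
          refine Finset.sum_congr rfl fun i _ => ?_
          rw [expand, Finset.mul_sum]
          exact Finset.sum_congr rfl fun t _ => by ring
      _ = ∑ t ∈ Finset.range (m+1), (m.choose t : ℝ) * altSum u t := by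
          rw [Finset.sum_comm]
          exact Finset.sum_congr rfl fun t _ => by rw [altSum, Finset.mul_sum]
  rw [h1, h2]
  simp
  ring

lemma altSum_eq_zero : ∀ u m : ℕ, m < u → altSum u m = 0 := by
  intro u
  induction u with
  | zero => intro m hm; omega
  | succ u ih =>
    intro m hm
    rw [altSum_succ, Finset.sum_range_succ, Nat.choose_self]
    have h : ∑ t ∈ Finset.range m, (m.choose t : ℝ) * altSum u t = 0 := by
      refine Finset.sum_eq_zero fun t ht => ?_
      rw [ih t (by simp at ht; omega)]
      ring
    rw [h]
    simp

lemma vandermonde_altSum (n u j : ℕ) :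
    ∑ m ∈ Finset.range (n + 1), (n.choose m : ℝ) * altSum u m * altSum j (n - m)
      = altSum (u + j) n := by
  classical
  set F : ℕ × ℕ → ℝ := fun p =>
    (-1:ℝ)^(p.1+p.2) * (u.choose p.1 : ℝ) * (j.choose p.2 : ℝ) * ((p.1+p.2 : ℕ) : ℝ)^n with hF
  have lhs_eq : ∑ m ∈ Finset.range (n + 1), (n.choose m : ℝ) * altSum u m * altSum j (n - m)
      = ∑ p ∈ Finset.range (u+1) ×ˢ Finset.range (j+1), F p := by
    rw [Finset.sum_product]
    calc ∑ m ∈ Finset.range (n + 1), (n.choose m : ℝ) * altSum u m * altSum j (n - m)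
        = ∑ m ∈ Finset.range (n + 1), ∑ i ∈ Finset.range (u+1), ∑ k ∈ Finset.range (j+1),
            ((-1:ℝ)^(i+k) * (u.choose i : ℝ) * (j.choose k : ℝ)) *
              ((i:ℝ)^m * (k:ℝ)^(n-m) * (n.choose m : ℝ)) := by
          refine Finset.sum_congr rfl fun m _ => ?_
          rw [altSum, altSum, mul_assoc, Finset.sum_mul_sum, Finset.mul_sum]
          refine Finset.sum_congr rfl fun i _ => ?_
          rw [Finset.mul_sum]
          refine Finset.sum_congr rfl fun k _ => ?_
          rw [pow_add]
          ring
      _ = ∑ i ∈ Finset.range (u+1), ∑ k ∈ Finset.range (j+1),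
            ((-1:ℝ)^(i+k) * (u.choose i : ℝ) * (j.choose k : ℝ)) *
            ∑ m ∈ Finset.range (n + 1), ((i:ℝ)^m * (k:ℝ)^(n-m) * (n.choose m : ℝ)) := by
          rw [Finset.sum_comm]
          refine Finset.sum_congr rfl fun i _ => ?_
          rw [Finset.sum_comm]
          refine Finset.sum_congr rfl fun k _ => ?_
          rw [Finset.mul_sum]
      _ = ∑ i ∈ Finset.range (u+1), ∑ k ∈ Finset.range (j+1), F (i, k) := by
          refine Finset.sum_congr rfl fun i _ => Finset.sum_congr rfl fun k _ => ?_
          rw [← add_pow]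
          simp only [hF]
          push_cast
          ring
  rw [lhs_eq]
  -- now the RHS
  have rhs_eq : altSum (u + j) n
      = ∑ s ∈ Finset.range (u+j+1), ∑ p ∈ Finset.HasAntidiagonal.antidiagonal s, F p := by
    rw [altSum]
    refine Finset.sum_congr rfl fun s hs => ?_
    have : ((u+j).choose s : ℝ) = ∑ p ∈ Finset.HasAntidiagonal.antidiagonal s, (u.choose p.1 : ℝ) * (j.choose p.2 : ℝ) := by
      rw [Nat.add_choose_eq]
      push_cast
      rfl
    rw [this, Finset.mul_sum, Finset.sum_mul]
    refine Finset.sum_congr rfl fun p hp => ?_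
    have hps : p.1 + p.2 = s := Finset.HasAntidiagonal.mem_antidiagonal.mp hp
    simp only [hF, hps]
    ring
  rw [rhs_eq, ← Finset.sum_biUnion]
  · refine Finset.sum_subset ?_ ?_
    · intro p hp
      simp only [Finset.mem_product, Finset.mem_range] at hp
      simp only [Finset.mem_biUnion, Finset.mem_range, Finset.HasAntidiagonal.mem_antidiagonal]
      exact ⟨p.1 + p.2, by omega, rfl⟩
    · intro p hp hnp
      simp only [Finset.mem_product, Finset.mem_range, not_and_or, not_lt] at hnp
      have : (u.choose p.1 : ℝ) = 0 ∨ (j.choose p.2 : ℝ) = 0 := by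
        rcases hnp with h | h
        · left; norm_cast; exact Nat.choose_eq_zero_of_lt (by omega)
        · right; norm_cast; exact Nat.choose_eq_zero_of_lt (by omega)
      simp only [hF]
      rcases this with h | h <;> rw [h] <;> ring
  · intro s hs t ht hst
    simp only [Finset.disjoint_left, Finset.mem_coe, Finset.HasAntidiagonal.mem_antidiagonal]
    intro p h1 h2
    exact hst (h1.symm.trans h2)

lemma stirlingSecond_eq_altSum (n m : ℕ) :
    stirlingSecond n m = (-1 : ℝ) ^ m * (1 / (m.factorial : ℝ)) * altSum m n := by
  simp only [stirlingSecond, altSum, Finset.mul_sum]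
  refine Finset.sum_congr rfl fun j hj => ?_
  have hj' : j ≤ m := by simp at hj; omega
  have : (-1:ℝ)^(m-j) = (-1)^m * (-1)^j := by
    have h1 : (-1:ℝ)^(m-j) * (-1)^j = (-1)^m := by
      rw [← pow_add]; congr 1; omega
    have h2 : (-1:ℝ)^j * (-1)^j = 1 := by
      rw [← mul_pow]; norm_num
    calc (-1:ℝ)^(m-j) = (-1:ℝ)^(m-j) * ((-1:ℝ)^j * (-1)^j) := by rw [h2, mul_one]
      _ = (-1)^m * (-1)^j := by rw [← mul_assoc, h1]
  rw [this]; ring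

lemma stirlingSecond_eq_zero {n m : ℕ} (h : n < m) : stirlingSecond n m = 0 := by
  rw [stirlingSecond_eq_altSum, altSum_eq_zero m n h]; ring

lemma stirling_conv (n u j : ℕ) :
    ∑ m ∈ Finset.range (n + 1),
      (n.choose m : ℝ) * stirlingSecond m u * stirlingSecond (n - m) j
    = ((u + j).choose u : ℝ) * stirlingSecond n (u + j) := by
  have hfact : (((u+j).choose u : ℝ)) * (u.factorial : ℝ) * (j.factorial : ℝ)
      = ((u+j).factorial : ℝ) := by
    norm_cast
    rw [Nat.choose_symm_add]
    exact Nat.add_choose_mul_factorial_mul_factorial u j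
  have hu : (u.factorial : ℝ) ≠ 0 := Nat.cast_ne_zero.mpr (Nat.factorial_ne_zero u)
  have hj : (j.factorial : ℝ) ≠ 0 := Nat.cast_ne_zero.mpr (Nat.factorial_ne_zero j)
  have huj : ((u+j).factorial : ℝ) ≠ 0 := Nat.cast_ne_zero.mpr (Nat.factorial_ne_zero _)
  calc ∑ m ∈ Finset.range (n + 1),
      (n.choose m : ℝ) * stirlingSecond m u * stirlingSecond (n - m) j
      = ((-1:ℝ)^u * (-1)^j * (1 / (u.factorial : ℝ)) * (1 / (j.factorial : ℝ))) *
          ∑ m ∈ Finset.range (n + 1), (n.choose m : ℝ) * altSum u m * altSum j (n - m) := by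
        rw [Finset.mul_sum]
        refine Finset.sum_congr rfl fun m _ => ?_
        rw [stirlingSecond_eq_altSum, stirlingSecond_eq_altSum]
        ring
    _ = ((-1:ℝ)^u * (-1)^j * (1 / (u.factorial : ℝ)) * (1 / (j.factorial : ℝ))) *
          altSum (u + j) n := by rw [vandermonde_altSum]
    _ = ((u + j).choose u : ℝ) * stirlingSecond n (u + j) := by
        rw [stirlingSecond_eq_altSum, pow_add]
        field_simp
        linear_combination (-altSum (u+j) n) * hfact

lemma diff_iter {f : ℝ → ℝ} (hf : ContDiff ℝ (⊤ : ℕ∞) f) (k : ℕ) :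
    Differentiable ℝ (iteratedDeriv k f) := by
  apply ContDiff.differentiable_iteratedDeriv'
  exact hf.of_le (by exact_mod_cast le_top)

lemma leibniz_iteratedDeriv (g f : ℝ → ℝ) (hg : ContDiff ℝ (⊤ : ℕ∞) g) (hf : ContDiff ℝ (⊤ : ℕ∞) f)
    (a : ℕ) :
    iteratedDeriv a (fun y => g y * f y) = fun x =>
      ∑ k ∈ Finset.range (a + 1),
        (a.choose k : ℝ) * iteratedDeriv k g x * iteratedDeriv (a - k) f x := by
  induction a with
  | zero => funext x; simp [iteratedDeriv_zero]
  | succ a ih =>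
    rw [iteratedDeriv_succ, ih]
    funext x
    have hdiff : ∀ k, ∀ x : ℝ, DifferentiableAt ℝ
        (fun y => (a.choose k : ℝ) * iteratedDeriv k g y * iteratedDeriv (a - k) f y) x := by
      intro k x
      exact (((diff_iter hg k).const_mul _).mul (diff_iter hf (a-k))) x
    rw [deriv_fun_sum (fun k _ => hdiff k x)]
    have hterm : ∀ k, deriv
        (fun y => (a.choose k : ℝ) * iteratedDeriv k g y * iteratedDeriv (a - k) f y) x
        = (a.choose k : ℝ) * (iteratedDeriv (k+1) g x * iteratedDeriv (a-k) f x
            + iteratedDeriv k g x * iteratedDeriv (a-k+1) f x) := by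
      intro k
      have : (fun y => (a.choose k : ℝ) * iteratedDeriv k g y * iteratedDeriv (a - k) f y)
          = fun y => (a.choose k : ℝ) * (iteratedDeriv k g y * iteratedDeriv (a - k) f y) := by
        funext y; ring
      rw [this, deriv_const_mul _ (((diff_iter hg k) x).fun_mul ((diff_iter hf (a-k)) x)),
        deriv_fun_mul ((diff_iter hg k) x) ((diff_iter hf (a-k)) x),
        ← iteratedDeriv_succ, ← iteratedDeriv_succ]
    simp only [hterm, mul_add]
    rw [Finset.sum_add_distrib]
    rw [Finset.sum_range_succ' (fun k => ((a+1).choose k : ℝ) * iteratedDeriv k g x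
      * iteratedDeriv (a + 1 - k) f x) (a+1)]
    have hsplit : ∀ i ∈ Finset.range (a+1),
        (((a+1).choose (i+1) : ℝ)) * iteratedDeriv (i+1) g x * iteratedDeriv (a+1-(i+1)) f x
        = (a.choose i : ℝ) * (iteratedDeriv (i+1) g x * iteratedDeriv (a-i) f x)
          + (a.choose (i+1) : ℝ) * (iteratedDeriv (i+1) g x * iteratedDeriv (a-i) f x) := by
      intro i _
      have h1 : a + 1 - (i+1) = a - i := by omega
      rw [h1, Nat.choose_succ_succ]
      push_cast
      ring
    rw [Finset.sum_congr rfl hsplit, Finset.sum_add_distrib]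
    have hB : ∑ k ∈ Finset.range (a+1),
        (a.choose k : ℝ) * (iteratedDeriv k g x * iteratedDeriv (a - k + 1) f x)
        = ∑ i ∈ Finset.range (a+1),
            (a.choose (i+1) : ℝ) * (iteratedDeriv (i+1) g x * iteratedDeriv (a-i) f x)
          + ((a+1).choose 0 : ℝ) * iteratedDeriv 0 g x * iteratedDeriv (a+1-0) f x := by
      rw [Finset.sum_range_succ' (fun k => (a.choose k : ℝ) *
        (iteratedDeriv k g x * iteratedDeriv (a - k + 1) f x)) a]
      rw [Finset.sum_range_succ (fun i => (a.choose (i+1) : ℝ) *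
        (iteratedDeriv (i+1) g x * iteratedDeriv (a-i) f x)) a]
      have h0 : ∀ i ∈ Finset.range a,
          (a.choose (i+1) : ℝ) * (iteratedDeriv (i+1) g x * iteratedDeriv (a-(i+1)+1) f x)
          = (a.choose (i+1) : ℝ) * (iteratedDeriv (i+1) g x * iteratedDeriv (a-i) f x) := by
        intro i hi
        simp only [Finset.mem_range] at hi
        have he : a - (i+1) + 1 = a - i := by omega
        rw [he]
      rw [Finset.sum_congr rfl h0, Nat.choose_succ_self]
      simp
    rw [hB]
    ring

lemma fallingFactorial_zero_of_lt {m k : ℕ} (h : m < k) : fallingFactorial (m:ℝ) k = 0 :=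
  Finset.prod_eq_zero (Finset.mem_range.mpr h) (by simp)

lemma fallingFactorial_nat (b u : ℕ) :
    fallingFactorial (b:ℝ) u = (b.descFactorial u : ℝ) := by
  induction u with
  | zero => simp [fallingFactorial]
  | succ u ih =>
    rw [fallingFactorial, Finset.prod_range_succ, ← fallingFactorial, ih,
      Nat.descFactorial_succ]
    by_cases h : u ≤ b
    · push_cast [h]
      ring
    · have h1 : b.descFactorial u = 0 := Nat.descFactorial_eq_zero_iff_lt.mpr (by omega)
      have h2 : b - u = 0 := by omega
      rw [h1, h2]
      simp

lemma fallingFactorial_eq_choose (b u : ℕ) :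
    fallingFactorial (b:ℝ) u = (b.choose u : ℝ) * (u.factorial : ℝ) := by
  rw [fallingFactorial_nat, Nat.descFactorial_eq_factorial_mul_choose]
  push_cast
  ring

lemma deriv_ff_term (m k : ℕ) :
    (deriv fun x : ℝ => fallingFactorial (m:ℝ) k * x ^ (m - k))
    = fun x => fallingFactorial (m:ℝ) (k+1) * x ^ (m - (k+1)) := by
  funext x
  rw [deriv_const_mul _ (differentiableAt_pow _), deriv_pow_field]
  have hff : fallingFactorial (m:ℝ) (k+1) = fallingFactorial (m:ℝ) k * ((m:ℝ) - k) :=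
    Finset.prod_range_succ _ _
  have hsub : m - (k+1) = m - k - 1 := by omega
  rw [hff, hsub]
  by_cases hk : k ≤ m
  · rw [Nat.cast_sub hk]; ring
  · rw [fallingFactorial_zero_of_lt (show m < k by omega)]; ring

lemma iteratedDeriv_poly (c : ℕ → ℝ) (N k : ℕ) :
    iteratedDeriv k (fun y : ℝ => ∑ m ∈ Finset.range N, c m * y ^ m)
    = fun x => ∑ m ∈ Finset.range N, c m * (fallingFactorial (m:ℝ) k * x ^ (m - k)) := by
  induction k with
  | zero =>
    funext x
    simp [iteratedDeriv_zero, fallingFactorial]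
  | succ k ih =>
    rw [iteratedDeriv_succ, ih]
    funext x
    rw [deriv_fun_sum (fun m _ => ((differentiableAt_pow _).const_mul _).const_mul _)]
    refine Finset.sum_congr rfl fun m _ => ?_
    rw [deriv_const_mul _ ((differentiableAt_pow _).const_mul _)]
    rw [congrFun (deriv_ff_term m k) x]

lemma contDiff_poly (c : ℕ → ℝ) (N : ℕ) :
    ContDiff ℝ (⊤ : ℕ∞) (fun y : ℝ => ∑ m ∈ Finset.range N, c m * y ^ m) := by
  apply ContDiff.sum
  intro m _
  exact contDiff_const.mul (contDiff_id.pow m)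

lemma key_bell (n u : ℕ) (x : ℝ) :
    ∑ m ∈ Finset.range (n + 1), stirlingSecond n m * (fallingFactorial (m:ℝ) u * x ^ (m - u))
    = (u.factorial : ℝ) * ∑ m ∈ Finset.range (n + 1),
        (n.choose m : ℝ) * stirlingSecond m u * bellPoly (n - m) x := by
  have rhs_eq : ∑ m ∈ Finset.range (n + 1),
      (n.choose m : ℝ) * stirlingSecond m u * bellPoly (n - m) x
      = ∑ j ∈ Finset.range (n + 1), ((u+j).choose u : ℝ) * stirlingSecond n (u+j) * x ^ j := by
    calc ∑ m ∈ Finset.range (n + 1), (n.choose m : ℝ) * stirlingSecond m u * bellPoly (n - m) x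
        = ∑ m ∈ Finset.range (n + 1), ∑ j ∈ Finset.range (n + 1),
            ((n.choose m : ℝ) * stirlingSecond m u * stirlingSecond (n-m) j) * x ^ j := by
          refine Finset.sum_congr rfl fun m hm => ?_
          simp only [Finset.mem_range] at hm
          rw [bellPoly, Finset.mul_sum]
          refine Finset.sum_subset (Finset.range_subset_range.mpr (show n - m + 1 ≤ n + 1 by omega)) (by
            intro j _ hj
            simp only [Finset.mem_range, not_lt] at hj
            rw [stirlingSecond_eq_zero (show n - m < j by omega)]
            ring) |>.trans ?_
          refine Finset.sum_congr rfl fun j _ => by ring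
      _ = ∑ j ∈ Finset.range (n + 1), ((u+j).choose u : ℝ) * stirlingSecond n (u+j) * x ^ j := by
          rw [Finset.sum_comm]
          refine Finset.sum_congr rfl fun j _ => ?_
          rw [← Finset.sum_mul, stirling_conv]
  rw [rhs_eq]
  have lhs_ext : ∑ m ∈ Finset.range (n + 1),
      stirlingSecond n m * (fallingFactorial (m:ℝ) u * x ^ (m - u))
      = ∑ m ∈ Finset.range (u + (n+1)),
        stirlingSecond n m * (fallingFactorial (m:ℝ) u * x ^ (m - u)) := by
    refine Finset.sum_subset (by
      intro m hm
      simp only [Finset.mem_range] at *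
      omega) (by
      intro m _ hm
      simp only [Finset.mem_range, not_lt] at hm
      rw [stirlingSecond_eq_zero (show n < m by omega)]
      ring)
  have e1 : ∑ m ∈ Finset.range (u + (n+1)),
      stirlingSecond n m * (fallingFactorial (m:ℝ) u * x ^ (m - u))
      = ∑ m ∈ Finset.Ico u (u + (n+1)),
          stirlingSecond n m * (fallingFactorial (m:ℝ) u * x ^ (m - u)) := by
    rw [Finset.range_eq_Ico]
    refine (Finset.sum_subset (Finset.Ico_subset_Ico (by omega) le_rfl) ?_).symm
    intro m h1 hm
    have hmu : m < u := by
      simp only [Finset.mem_Ico] at h1 hm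
      omega
    rw [fallingFactorial_zero_of_lt hmu]
    ring
  have e2 : ∑ m ∈ Finset.Ico u (u + (n+1)),
      stirlingSecond n m * (fallingFactorial (m:ℝ) u * x ^ (m - u))
      = ∑ j ∈ Finset.range (n+1),
          stirlingSecond n (u+j) * (fallingFactorial ((u+j : ℕ):ℝ) u * x ^ ((u+j) - u)) := by
    rw [Finset.sum_Ico_eq_sum_range]
    rw [show u + (n+1) - u = n+1 from by omega]
  rw [lhs_ext, e1, e2, Finset.mul_sum]
  refine Finset.sum_congr rfl fun j _ => ?_
  rw [show u + j - u = j from by omega, fallingFactorial_eq_choose]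
  ring

/-- Integer-order case of the paper's Theorem 4.9: truncated Leibniz rule for the
product of the exponential polynomial `φₙ` and a smooth function. -/
theorem truncated_leibniz_bellPoly (f : ℝ → ℝ) (hf : ContDiff ℝ (⊤ : ℕ∞) f)
    (n a : ℕ) (x : ℝ) :
    iteratedDeriv a (fun y => bellPoly n y * f y) x =
      ∑ m ∈ Finset.range (n + 1), ∑ u ∈ Finset.range (m + 1),
        (n.choose m : ℝ) * stirlingSecond m u * bellPoly (n - m) x *
          fallingFactorial (a : ℝ) u * iteratedDeriv (a - u) f x := by
  classical
  set K := n + a + 2 with hK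
  have hg : (fun y : ℝ => bellPoly n y)
      = fun y : ℝ => ∑ m ∈ Finset.range (n+1), stirlingSecond n m * y ^ m := rfl
  have hbell : ContDiff ℝ (⊤ : ℕ∞) (fun y : ℝ => bellPoly n y) := by
    rw [hg]; exact contDiff_poly _ _
  have step1 : iteratedDeriv a (fun y => bellPoly n y * f y) x
      = ∑ k ∈ Finset.range (a + 1), (a.choose k : ℝ) *
          (∑ m ∈ Finset.range (n+1), stirlingSecond n m *
            (fallingFactorial (m:ℝ) k * x ^ (m - k))) * iteratedDeriv (a - k) f x := by
    rw [congrFun (leibniz_iteratedDeriv _ f hbell hf a) x]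
    refine Finset.sum_congr rfl fun k _ => ?_
    rw [hg, congrFun (iteratedDeriv_poly (stirlingSecond n) (n+1) k) x]
  rw [step1]
  -- extend the left sum to `range K`
  have lhs_ext : ∑ k ∈ Finset.range (a + 1), (a.choose k : ℝ) *
      (∑ m ∈ Finset.range (n+1), stirlingSecond n m *
        (fallingFactorial (m:ℝ) k * x ^ (m - k))) * iteratedDeriv (a - k) f x
      = ∑ k ∈ Finset.range K, (a.choose k : ℝ) *
      (∑ m ∈ Finset.range (n+1), stirlingSecond n m *
        (fallingFactorial (m:ℝ) k * x ^ (m - k))) * iteratedDeriv (a - k) f x := by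
    refine Finset.sum_subset (Finset.range_subset_range.mpr (by omega)) ?_
    intro k _ hk
    simp only [Finset.mem_range, not_lt] at hk
    rw [Nat.choose_eq_zero_of_lt (show a < k by omega)]
    push_cast
    ring
  rw [lhs_ext]
  -- extend the right inner sums to `range K` and swap
  have rhs_ext : ∑ m ∈ Finset.range (n + 1), ∑ u ∈ Finset.range (m + 1),
      (n.choose m : ℝ) * stirlingSecond m u * bellPoly (n - m) x *
        fallingFactorial (a : ℝ) u * iteratedDeriv (a - u) f x
      = ∑ u ∈ Finset.range K, ∑ m ∈ Finset.range (n + 1),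
      (n.choose m : ℝ) * stirlingSecond m u * bellPoly (n - m) x *
        fallingFactorial (a : ℝ) u * iteratedDeriv (a - u) f x := by
    have ext1 : ∀ m ∈ Finset.range (n+1),
        ∑ u ∈ Finset.range (m + 1),
          (n.choose m : ℝ) * stirlingSecond m u * bellPoly (n - m) x *
            fallingFactorial (a : ℝ) u * iteratedDeriv (a - u) f x
        = ∑ u ∈ Finset.range K,
          (n.choose m : ℝ) * stirlingSecond m u * bellPoly (n - m) x *
            fallingFactorial (a : ℝ) u * iteratedDeriv (a - u) f x := by
      intro m hm
      simp only [Finset.mem_range] at hm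
      refine Finset.sum_subset (Finset.range_subset_range.mpr (show m + 1 ≤ K by omega)) ?_
      intro u _ hu
      simp only [Finset.mem_range, not_lt] at hu
      rw [stirlingSecond_eq_zero (show m < u by omega)]
      ring
    rw [Finset.sum_congr rfl ext1, Finset.sum_comm]
  rw [rhs_ext]
  refine Finset.sum_congr rfl fun u _ => ?_
  rw [key_bell n u x, Finset.mul_sum, Finset.mul_sum, Finset.sum_mul]
  refine Finset.sum_congr rfl fun m _ => ?_
  rw [fallingFactorial_eq_choose a u]
  ring
end

section
/- Let $\alpha, y \in \mathbb{R}$, let $m \ge 1$ be a natural number, and let $r \in \mathbb{R}$ satisfy $r \ne 1$ and $y + \frac{1}{r-1} > 0$. Then $\frac{d^m}{dr^m}\Big[\Big(y + \frac{1}{r-1}\Big)^{\alpha}\Big] = \sum_{k=1}^{m} \binom{m-1}{k-1} \frac{m!}{k!}\, \frac{(-1)^m}{(r-1)^{m+k}}\, (\alpha)_k\, \Big(y + \frac{1}{r-1}\Big)^{\alpha - k}$, where real powers $w^s$ (for $w > 0$, $s \in \mathbb{R}$) denote $e^{s \ln w}$. -/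
open Finset Topology
open scoped Nat

/-- The unsigned Lah numbers. -/
def lah : ℕ → ℕ → ℕ
  | 0, 0 => 1
  | 0, _ + 1 => 0
  | _ + 1, 0 => 0
  | m + 1, k + 1 => (m + k + 1) * lah m (k + 1) + lah m k

@[simp] theorem lah_zero_zero : lah 0 0 = 1 := rfl

@[simp] theorem lah_zero_succ (k : ℕ) : lah 0 (k + 1) = 0 := rfl

@[simp] theorem lah_succ_zero (m : ℕ) : lah (m + 1) 0 = 0 := rfl

theorem lah_succ_succ (m k : ℕ) :
    lah (m + 1) (k + 1) = (m + k + 1) * lah m (k + 1) + lah m k := rfl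

theorem lah_eq_zero_of_lt : ∀ {m k : ℕ}, m < k → lah m k = 0
  | 0, _ + 1, _ => rfl
  | m + 1, k + 1, h => by
    rw [lah_succ_succ, lah_eq_zero_of_lt (by omega : m < k + 1),
      lah_eq_zero_of_lt (by omega : m < k), mul_zero]

theorem mul_lah_zero (m : ℕ) : m * lah m 0 = 0 := by
  cases m <;> simp

theorem choose_lah_identity (m j : ℕ) :
    (m + j + 3) * m.choose (j + 1) + (j + 2) * m.choose j = (m + 2) * (m + 1).choose (j + 1) := by
  have h₁ := Nat.add_one_mul_choose_eq m j
  have h₂ := Nat.choose_succ_succ' m j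
  apply Nat.eq_of_mul_eq_mul_left m.succ_pos
  zify at h₁ h₂ ⊢
  linear_combination -(↑m + 1 : ℤ) * (↑m + ↑j + 3) * h₂ - (↑m + 1 : ℤ) * h₁

theorem lah_succ_mul_factorial (m k : ℕ) :
    lah (m + 1) (k + 1) * (k + 1)! = m.choose k * (m + 1)! := by
  induction m generalizing k with
  | zero => cases k <;> simp [lah_succ_succ]
  | succ m ih =>
    rcases k with _ | j
    · have h := ih 0
      rw [Nat.choose_zero_right] at h
      rw [lah_succ_succ, lah_succ_zero, Nat.factorial_succ (m + 1), Nat.choose_zero_right]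
      linear_combination (m + 2) * h
    · have h₁ := ih (j + 1)
      have h₂ := ih j
      rw [Nat.factorial_succ (j + 1)] at h₁
      rw [lah_succ_succ, Nat.factorial_succ (j + 1), Nat.factorial_succ (m + 1)]
      linear_combination (m + j + 3) * h₁ + (j + 2) * h₂ + (m + 1)! * choose_lah_identity m j

theorem sum_lah_succ_mul (m : ℕ) (F : ℕ → ℝ) :
    ∑ k ∈ range (m + 2), (lah (m + 1) k : ℝ) * F k =
      ∑ k ∈ range (m + 1), (lah m k : ℝ) * ((m + k) * F k + F (k + 1)) := by
  have hbot : (lah m 0 : ℝ) * ((m + (0 : ℕ)) * F 0) = 0 := by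
    have h : (m : ℝ) * lah m 0 = 0 := by exact_mod_cast mul_lah_zero m
    rw [Nat.cast_zero, add_zero]
    linear_combination F 0 * h
  have htop : (lah m (m + 1) : ℝ) = 0 := by exact_mod_cast lah_eq_zero_of_lt m.lt_succ_self
  have hshift : ∑ k ∈ range (m + 1), ((m + k + 1 : ℕ) : ℝ) * lah m (k + 1) * F (k + 1) =
      ∑ k ∈ range (m + 1), (lah m k : ℝ) * ((m + k) * F k) := by
    rw [sum_range_succ, sum_range_succ' _ m, htop, hbot]
    simp only [mul_zero, zero_mul, add_zero, Nat.cast_add, Nat.cast_one]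
    exact sum_congr rfl fun k _ => by ring
  rw [sum_range_succ', lah_succ_zero, Nat.cast_zero, zero_mul, add_zero]
  simp_rw [mul_add]
  rw [sum_add_distrib, ← hshift, ← sum_add_distrib]
  refine sum_congr rfl fun k _ => ?_
  rw [lah_succ_succ]
  push_cast
  ring

theorem fallingFactorial_succ (a : ℝ) (k : ℕ) :
    fallingFactorial a (k + 1) = fallingFactorial a k * (a - k) :=
  prod_range_succ _ _

theorem hasDerivAt_inv_sub_one {r : ℝ} (hr : r ≠ 1) :
    HasDerivAt (fun s => (s - 1)⁻¹) (-(r - 1)⁻¹ ^ 2) r := by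
  refine (((hasDerivAt_id' r).sub_const 1).inv (sub_ne_zero.mpr hr)).congr_deriv ?_
  rw [inv_pow, neg_div, one_div]

theorem hasDerivAt_inv_sub_one_pow_mul_rpow (y β : ℝ) (n : ℕ) {r : ℝ} (hr : r ≠ 1)
    (hyr : 0 < y + (r - 1)⁻¹) :
    HasDerivAt (fun s => (s - 1)⁻¹ ^ n * (y + (s - 1)⁻¹) ^ β)
      (-(n * (r - 1)⁻¹ ^ (n + 1) * (y + (r - 1)⁻¹) ^ β +
        β * (r - 1)⁻¹ ^ (n + 2) * (y + (r - 1)⁻¹) ^ (β - 1))) r := by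
  have hx := hasDerivAt_inv_sub_one hr
  refine ((hx.fun_pow n).fun_mul ((hx.const_add y).rpow_const (Or.inl hyr.ne'))).congr_deriv ?_
  rcases n with _ | n
  · simp [mul_comm]
  · simp only [Nat.add_sub_cancel]
    push_cast
    ring

theorem eventually_ne_one_and_pos {y r : ℝ} (hr : r ≠ 1) (hyr : 0 < y + (r - 1)⁻¹) :
    ∀ᶠ s in 𝓝 r, s ≠ 1 ∧ 0 < y + (s - 1)⁻¹ :=
  (eventually_ne_nhds hr).and <|
    ((hasDerivAt_inv_sub_one hr).continuousAt.const_add y).eventually_const_lt hyr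

theorem iteratedDeriv_rpow_add_inv_sub_one (α y : ℝ) (m : ℕ) {r : ℝ} (hr : r ≠ 1)
    (hyr : 0 < y + (r - 1)⁻¹) :
    iteratedDeriv m (fun s => (y + (s - 1)⁻¹) ^ α) r =
      (-1) ^ m * ∑ k ∈ range (m + 1), lah m k *
        (fallingFactorial α k * ((r - 1)⁻¹ ^ (m + k) * (y + (r - 1)⁻¹) ^ (α - k))) := by
  induction m generalizing r with
  | zero => simp [fallingFactorial]
  | succ m ih =>
    have hclosed : iteratedDeriv m (fun s => (y + (s - 1)⁻¹) ^ α) =ᶠ[𝓝 r] fun s =>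
        (-1) ^ m * ∑ k ∈ range (m + 1), lah m k *
          (fallingFactorial α k * ((s - 1)⁻¹ ^ (m + k) * (y + (s - 1)⁻¹) ^ (α - k))) :=
      (eventually_ne_one_and_pos hr hyr).mono fun s hs => ih hs.1 hs.2
    have hderiv := (HasDerivAt.fun_sum (u := range (m + 1)) fun k _ =>
      ((hasDerivAt_inv_sub_one_pow_mul_rpow y (α - k) (m + k) hr hyr).const_mul
        (fallingFactorial α k)).const_mul (lah m k : ℝ)).const_mul ((-1 : ℝ) ^ m)
    rw [iteratedDeriv_succ, hclosed.deriv_eq, hderiv.deriv,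
      sum_lah_succ_mul m fun k =>
        fallingFactorial α k * ((r - 1)⁻¹ ^ (m + 1 + k) * (y + (r - 1)⁻¹) ^ (α - k)),
      pow_succ, mul_assoc, neg_one_mul, ← sum_neg_distrib]
    congr 1
    refine sum_congr rfl fun k _ => ?_
    rw [fallingFactorial_succ, Nat.cast_add_one, ← sub_sub]
    push_cast
    ring

/-- The closed-form derivative from the proof of the paper's Theorem 4.12:
`dᵐ/drᵐ (y + 1/(r-1))^α` for `m ≥ 1`, where `^` denotes the real power `Real.rpow`. -/
theorem iteratedDeriv_rpow_inv (α y : ℝ) (m : ℕ) (hm : 1 ≤ m) (r : ℝ)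
    (hr : r ≠ 1) (hyr : 0 < y + (r - 1)⁻¹) :
    iteratedDeriv m (fun s => (y + (s - 1)⁻¹) ^ α) r =
      ∑ k ∈ Finset.Icc 1 m,
        ((m - 1).choose (k - 1) : ℝ) * ((m.factorial : ℝ) / (k.factorial : ℝ)) *
          ((-1 : ℝ) ^ m / (r - 1) ^ (m + k)) * fallingFactorial α k *
          (y + (r - 1)⁻¹) ^ (α - k) := by
  obtain ⟨n, rfl⟩ := Nat.exists_eq_add_of_le' hm
  rw [iteratedDeriv_rpow_add_inv_sub_one α y (n + 1) hr hyr, sum_range_eq_add_Ico _ (by omega),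
    lah_succ_zero, Nat.cast_zero, zero_mul, zero_add, Ico_add_one_right_eq_Icc, mul_sum]
  refine sum_congr rfl fun k hk => ?_
  obtain ⟨j, rfl⟩ := Nat.exists_eq_add_of_le' (mem_Icc.mp hk).1
  have hlah : (lah (n + 1) (j + 1) : ℝ) = n.choose j * ((n + 1)! / (j + 1)!) := by
    rw [mul_div_assoc', eq_div_iff (by positivity)]
    exact_mod_cast lah_succ_mul_factorial n j
  rw [hlah, Nat.add_sub_cancel, Nat.add_sub_cancel, div_eq_mul_inv ((-1 : ℝ) ^ _), ← inv_pow]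
  ring
end
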